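/- arXiv:2308.03489 — 8 statements merged into one kernel-verified Lean document; each statement's English description precedes it below -/
import Mathlib

section
/- The Expected Shapley value satisfies Expected Efficiency: for every probabilistic TU game $(N,v,p^N)$, $\sum_{i \in N} \Phi_i^{Exp\text{-}Sh}(N,v,p^N) = \mathbb{E}(N,v,p^N)$. -/
open Finset

variable {α : Type*} [DecidableEq α]

/-- Harsanyi dividend (closed form). -/
noncomputable def dividend (v : Finset α → ℝ) (S : Finset α) : ℝ :=
  ∑ T ∈ S.powerset, (-1 : ℝ) ^ (S.card - T.card) * v T

/-- Shapley value of player `i` in the game `(S, v)`. -/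
noncomputable def shapley (v : Finset α → ℝ) (S : Finset α) (i : α) : ℝ :=
  ∑ T ∈ S.powerset, if i ∈ T then dividend v T / (T.card : ℝ) else 0

/-- Expected worth of a probabilistic TU game `(N, v, p)`. -/
noncomputable def expWorth (N : Finset α) (v p : Finset α → ℝ) : ℝ :=
  ∑ S ∈ N.powerset, p S * v S

/-- The Expected Shapley value. -/
noncomputable def expShapley (N : Finset α) (v p : Finset α → ℝ) (i : α) : ℝ :=
  ∑ S ∈ N.powerset, if i ∈ S then p S * shapley v S i else 0

/-- Restriction `p_{-i}` of a coalition formation probability distribution. -/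
noncomputable def pMinus (p : Finset α → ℝ) (i : α) (S : Finset α) : ℝ :=
  if i ∈ S then 0 else p S + p (insert i S)

/-- Restriction `p^N_M` of a coalition formation probability distribution on `2^N` to `M`. -/
noncomputable def pRestrict (N M : Finset α) (p : Finset α → ℝ) (S : Finset α) : ℝ :=
  if S ⊆ M then ∑ T ∈ (N \ M).powerset, p (S ∪ T) else 0

/-- `p^N_M(M) = ∑_{K ⊆ N \ M} p (M ∪ K)`. -/
noncomputable def pBar (N : Finset α) (p : Finset α → ℝ) (M : Finset α) : ℝ :=
  ∑ K ∈ (N \ M).powerset, p (M ∪ K)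

/-- Unanimity game `u_T`. -/
noncomputable def uGame (T S : Finset α) : ℝ := if T ⊆ S then 1 else 0

/-- `p` is a probability distribution over the coalitions of `N`. -/
def IsDist (N : Finset α) (p : Finset α → ℝ) : Prop :=
  (∀ S, 0 ≤ p S) ∧ (∀ S, ¬ S ⊆ N → p S = 0) ∧ (∑ S ∈ N.powerset, p S = 1)


/-- Möbius inversion: dividends sum back to the worth. -/
lemma sum_dividend (v : Finset α → ℝ) (S : Finset α) :
    ∑ T ∈ S.powerset, dividend v T = v S := by
  unfold dividend
  have hrw : ∀ T ∈ S.powerset,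
      (∑ U ∈ T.powerset, (-1 : ℝ) ^ (T.card - U.card) * v U)
        = ∑ U ∈ S.powerset, if U ⊆ T then (-1 : ℝ) ^ (T.card - U.card) * v U else 0 := by
    intro T hT
    rw [mem_powerset] at hT
    rw [← Finset.sum_filter]
    congr 1
    ext U
    simp only [Finset.mem_filter, Finset.mem_powerset]
    constructor
    · intro h; exact ⟨h.trans hT, h⟩
    · exact fun h => h.2
  rw [Finset.sum_congr rfl hrw, Finset.sum_comm]
  have key : ∀ U ∈ S.powerset,
      (∑ T ∈ S.powerset, if U ⊆ T then (-1 : ℝ) ^ (T.card - U.card) * v U else 0)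
        = if U = S then v S else 0 := by
    intro U hU
    rw [mem_powerset] at hU
    rw [← Finset.sum_filter]
    have hbij : ∑ T ∈ S.powerset.filter (fun T => U ⊆ T),
        (-1 : ℝ) ^ (T.card - U.card) * v U
        = ∑ K ∈ (S \ U).powerset, (-1 : ℝ) ^ K.card * v U := by
      apply Finset.sum_nbij' (fun T => T \ U) (fun K => U ∪ K)
      · intro T hT
        simp only [Finset.mem_filter, Finset.mem_powerset] at hT
        rw [Finset.mem_powerset]
        exact Finset.sdiff_subset_sdiff hT.1 le_rfl
      · intro K hK
        rw [Finset.mem_powerset] at hK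
        simp only [Finset.mem_filter, Finset.mem_powerset]
        constructor
        · exact Finset.union_subset hU (hK.trans (Finset.sdiff_subset))
        · exact Finset.subset_union_left
      · intro T hT
        simp only [Finset.mem_filter, Finset.mem_powerset] at hT
        rw [Finset.union_sdiff_of_subset hT.2]
      · intro K hK
        rw [Finset.mem_powerset] at hK
        rw [Finset.union_sdiff_cancel_left]
        exact Finset.disjoint_left.2 fun a haU haK => (Finset.mem_sdiff.1 (hK haK)).2 haU
      · intro T hT
        simp only [Finset.mem_filter, Finset.mem_powerset] at hT
        congr 2
        rw [Finset.card_sdiff_of_subset hT.2]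
    rw [hbij, ← Finset.sum_mul]
    have : (∑ K ∈ (S \ U).powerset, (-1 : ℝ) ^ K.card)
        = if S \ U = ∅ then 1 else 0 := by
      have := @Finset.sum_powerset_neg_one_pow_card α _ (S \ U)
      have h2 : ((∑ m ∈ (S \ U).powerset, (-1 : ℤ) ^ m.card : ℤ) : ℝ)
          = ∑ K ∈ (S \ U).powerset, (-1 : ℝ) ^ K.card := by push_cast; rfl
      rw [this] at h2
      rw [← h2]
      split <;> simp
    rw [this]
    have heq : (S \ U = ∅) ↔ (U = S) := by
      rw [Finset.sdiff_eq_empty_iff_subset]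
      exact ⟨fun h => le_antisymm hU h, fun h => h ▸ le_rfl⟩
    by_cases h : U = S
    · simp [h, heq]
    · rw [if_neg ((not_iff_not.2 heq).2 h), if_neg h, zero_mul]
  rw [Finset.sum_congr rfl key, Finset.sum_ite_eq' S.powerset S (fun _ => v S),
    if_pos (Finset.mem_powerset.2 le_rfl)]

/-- Efficiency of the Shapley value. -/
lemma shapley_efficiency (v : Finset α → ℝ) (S : Finset α) (hv : v ∅ = 0) :
    ∑ i ∈ S, shapley v S i = v S := by
  unfold shapley
  rw [Finset.sum_comm]
  have key : ∀ T ∈ S.powerset,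
      (∑ i ∈ S, if i ∈ T then dividend v T / (T.card : ℝ) else 0) = dividend v T := by
    intro T hT
    rw [mem_powerset] at hT
    rw [← Finset.sum_filter, Finset.filter_mem_eq_inter,
      Finset.inter_eq_right.2 hT, Finset.sum_const, nsmul_eq_mul]
    by_cases h : T = ∅
    · subst h; simp [dividend, hv]
    · rw [mul_div_cancel₀]
      exact_mod_cast Finset.card_ne_zero_of_mem (Finset.nonempty_iff_ne_empty.2 h).choose_spec
  rw [Finset.sum_congr rfl key, sum_dividend]

/-- Expected Efficiency of the Expected Shapley value. -/
theorem expShapley_efficiency (N : Finset α) (v p : Finset α → ℝ)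
    (hdist : IsDist N p) (hv : v ∅ = 0) :
    ∑ i ∈ N, expShapley N v p i = expWorth N v p := by
  unfold expShapley expWorth
  rw [Finset.sum_comm]
  apply Finset.sum_congr rfl
  intro S hS
  rw [mem_powerset] at hS
  rw [← Finset.sum_filter, Finset.filter_mem_eq_inter, Finset.inter_eq_right.2 hS,
    ← Finset.mul_sum, shapley_efficiency v S hv]
end

section
/- The Expected Shapley value has the dividend form $\Phi_i^{Exp\text{-}Sh}(N,v,p^N) = \sum_{S \subseteq N: i \in S} \frac{\Delta_v(S)}{|S|} \, p^N_S(S)$, where $p^N_S(S) = \sum_{K \subseteq N\setminus S} p^N(S \cup K)$. -/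
open Finset

variable {α : Type*} [DecidableEq α]

/-- Dividend form of the Expected Shapley value:
`Φ_i = ∑_{S ∋ i} (Δ_v(S)/|S|) ⬝ p^N_S(S)` where `p^N_S(S) = ∑_{K ⊆ N \ S} p(S ∪ K)`. -/
theorem expShapley_dividend_form (N : Finset α) (v p : Finset α → ℝ) (i : α)
    (hdist : IsDist N p) (hi : i ∈ N) :
    expShapley N v p i =
      ∑ S ∈ N.powerset,
        (if i ∈ S then dividend v S / (S.card : ℝ) * pBar N p S else 0) := by
    classical
  have key : ∀ T ∈ N.powerset,
      (∑ S ∈ N.powerset, if T ⊆ S then p S else 0) = pBar N p T := by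
    intro T hT
    rw [Finset.sum_ite, Finset.sum_const_zero, add_zero]
    unfold pBar
    refine Finset.sum_bij' (fun S _ => S \ T) (fun K _ => T ∪ K) ?_ ?_ ?_ ?_ ?_
    · intro S hS
      simp only [Finset.mem_filter, Finset.mem_powerset] at hS
      simp only [Finset.mem_powerset]
      intro x hx
      simp only [Finset.mem_sdiff] at hx ⊢
      exact ⟨hS.1 hx.1, hx.2⟩
    · intro K hK
      simp only [Finset.mem_powerset] at hK
      simp only [Finset.mem_filter, Finset.mem_powerset]
      refine ⟨Finset.union_subset (Finset.mem_powerset.mp hT) ?_, Finset.subset_union_left⟩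
      intro x hx
      exact (Finset.mem_sdiff.mp (hK hx)).1
    · intro S hS
      simp only [Finset.mem_filter, Finset.mem_powerset] at hS
      exact Finset.union_sdiff_of_subset hS.2
    · intro K hK
      simp only [Finset.mem_powerset] at hK
      exact Finset.union_sdiff_cancel_left
        (Finset.disjoint_left.mpr fun x hxT hxK => (Finset.mem_sdiff.mp (hK hxK)).2 hxT)
    · intro S hS
      simp only [Finset.mem_filter, Finset.mem_powerset] at hS
      rw [Finset.union_sdiff_of_subset hS.2]
  unfold expShapley shapley
  have step1 : ∀ S ∈ N.powerset,
      (if i ∈ S then p S * ∑ T ∈ S.powerset, (if i ∈ T then dividend v T / (T.card : ℝ) else 0) else 0)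
        = ∑ T ∈ N.powerset, if T ⊆ S ∧ i ∈ T then dividend v T / (T.card : ℝ) * p S else 0 := by
    intro S hS
    rw [Finset.mem_powerset] at hS
    by_cases h : i ∈ S
    · rw [if_pos h, Finset.mul_sum]
      have hpow : S.powerset = N.powerset.filter (· ⊆ S) := by
        ext T; simp only [Finset.mem_powerset, Finset.mem_filter]
        exact ⟨fun h' => ⟨h'.trans hS, h'⟩, fun h' => h'.2⟩
      rw [hpow, Finset.sum_filter]
      apply Finset.sum_congr rfl
      intro T _
      by_cases hTS : T ⊆ S <;> by_cases hiT : i ∈ T <;>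
        simp [hTS, hiT, mul_comm]
    · rw [if_neg h]
      symm
      apply Finset.sum_eq_zero
      intro T _
      rw [if_neg]
      rintro ⟨hTS, hiT⟩
      exact h (hTS hiT)
  rw [Finset.sum_congr rfl step1, Finset.sum_comm]
  apply Finset.sum_congr rfl
  intro T hT
  by_cases hiT : i ∈ T
  · rw [if_pos hiT]
    rw [← key T hT, Finset.mul_sum]
    apply Finset.sum_congr rfl
    intro S _
    by_cases hTS : T ⊆ S <;> simp [hTS, hiT]
  · rw [if_neg hiT]
    apply Finset.sum_eq_zero
    intro S _
    rw [if_neg]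
    rintro ⟨_, h⟩
    exact hiT h
end

section
/- Uniqueness in the first characterization: if a value $\Phi$ on probabilistic TU games satisfies Expected Efficiency, the Expected Null Player property, Compatibility, and Additivity, then $\Phi = \Phi^{Exp\text{-}Sh}$ (under the standing assumption that these axioms hold relative to coalitions in the support of $p^N$). -/
open Finset

variable {α : Type*} [DecidableEq α]

lemma alt_sum (x : Finset α) : ∑ m ∈ x.powerset, (-1:ℝ)^m.card = if x = ∅ then 1 else 0 := by
  have h := Finset.sum_powerset_neg_one_pow_card (x := x)
  have : ((∑ m ∈ x.powerset, (-1:ℤ)^m.card : ℤ) : ℝ) = ∑ m ∈ x.powerset, (-1:ℝ)^m.card := by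
    push_cast; ring_nf
  rw [← this, h]
  split <;> norm_num

lemma alt_sum' (D : Finset α) :
    ∑ P ∈ D.powerset, (-1:ℝ)^(D.card - P.card) = if D = ∅ then 1 else 0 := by
  have key : ∀ P ∈ D.powerset, (-1:ℝ)^(D.card - P.card) = (-1)^D.card * (-1)^P.card := by
    intro P hP
    have hle : P.card ≤ D.card := card_le_card (mem_powerset.1 hP)
    have h1 : (-1:ℝ)^(D.card - P.card) * (-1)^P.card = (-1)^D.card := by
      rw [← pow_add, Nat.sub_add_cancel hle]
    have h2 : (-1:ℝ)^P.card * (-1)^P.card = 1 := by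
      rw [← mul_pow]; norm_num
    calc (-1:ℝ)^(D.card - P.card) = (-1:ℝ)^(D.card - P.card) * ((-1)^P.card * (-1)^P.card) := by
          rw [h2, mul_one]
      _ = (-1)^D.card * (-1)^P.card := by rw [← mul_assoc, h1]
  rw [Finset.sum_congr rfl key, ← mul_sum, alt_sum]
  split <;> simp_all

/-- reindex sum over supersets of A inside S -/
lemma sum_superset_reindex (f : Finset α → ℝ) (A S : Finset α) (hA : A ⊆ S) :
    ∑ T ∈ S.powerset.filter (fun T => A ⊆ T), f T = ∑ P ∈ (S \ A).powerset, f (A ∪ P) := by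
  apply Finset.sum_nbij' (fun T => T \ A) (fun P => A ∪ P)
  · intro T hT
    simp only [mem_filter, mem_powerset] at hT
    exact mem_powerset.2 (sdiff_subset_sdiff hT.1 Subset.rfl)
  · intro P hP
    simp only [mem_powerset] at hP
    simp only [mem_filter, mem_powerset]
    constructor
    · exact union_subset hA (hP.trans sdiff_subset)
    · exact subset_union_left
  · intro T hT
    simp only [mem_filter, mem_powerset] at hT
    exact (union_sdiff_of_subset hT.2)
  · intro P hP
    simp only [mem_powerset] at hP
    rw [union_sdiff_cancel_left]
    exact disjoint_of_subset_right hP disjoint_sdiff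
  · intro T hT
    simp only [mem_filter, mem_powerset] at hT
    rw [union_sdiff_of_subset hT.2]

lemma dividend_uGame (T R : Finset α) : dividend (uGame T) R = if R = T then 1 else 0 := by
  unfold dividend uGame
  by_cases hTR : T ⊆ R
  · have step : ∀ Q ∈ R.powerset, (-1:ℝ)^(R.card - Q.card) * (if T ⊆ Q then (1:ℝ) else 0)
        = if T ⊆ Q then (-1:ℝ)^(R.card - Q.card) else 0 := by
      intro Q _; split <;> simp
    rw [Finset.sum_congr rfl step, ← Finset.sum_filter, sum_superset_reindex _ T R hTR]
    have step2 : ∀ P ∈ (R \ T).powerset,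
        (-1:ℝ)^(R.card - (T ∪ P).card) = (-1:ℝ)^((R\T).card - P.card) := by
      intro P hP
      have hP' := mem_powerset.1 hP
      have hdisj : Disjoint T P := disjoint_of_subset_right hP' disjoint_sdiff
      rw [card_union_of_disjoint hdisj, card_sdiff_of_subset hTR]
      congr 1
      omega
    rw [Finset.sum_congr rfl step2, alt_sum']
    have : R \ T = ∅ ↔ R = T := by
      rw [sdiff_eq_empty_iff_subset]
      exact ⟨fun h => Subset.antisymm h hTR, fun h => h ▸ Subset.rfl⟩
    simp [this]
  · have : ∀ Q ∈ R.powerset, (-1:ℝ)^(R.card - Q.card) * (if T ⊆ Q then (1:ℝ) else 0) = 0 := by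
      intro Q hQ
      have : ¬ T ⊆ Q := fun h => hTR (h.trans (mem_powerset.1 hQ))
      simp [this]
    rw [Finset.sum_eq_zero this]
    have : R ≠ T := fun h => hTR (h ▸ Subset.rfl)
    simp [this]

lemma shapley_uGame (T S : Finset α) (i : α) :
    shapley (uGame T) S i = if i ∈ T ∧ T ⊆ S then ((T.card : ℝ))⁻¹ else 0 := by
  unfold shapley
  have step : ∀ R ∈ S.powerset, (if i ∈ R then dividend (uGame T) R / (R.card : ℝ) else 0)
      = if R = T then (if i ∈ T then ((T.card:ℝ))⁻¹ else 0) else 0 := by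
    intro R _
    rw [dividend_uGame]
    by_cases hRT : R = T
    · subst hRT
      simp only [if_pos rfl]
      split <;> simp [one_div]
    · simp [hRT]
  rw [Finset.sum_congr rfl step, Finset.sum_ite_eq' S.powerset T]
  simp only [mem_powerset]
  by_cases h1 : T ⊆ S <;> by_cases h2 : i ∈ T <;> simp [h1, h2]

lemma dividend_smul (c : ℝ) (v : Finset α → ℝ) (R : Finset α) :
    dividend (fun S => c * v S) R = c * dividend v R := by
  unfold dividend
  rw [mul_sum]
  exact Finset.sum_congr rfl fun T _ => by ring

lemma shapley_smul (c : ℝ) (v : Finset α → ℝ) (S : Finset α) (i : α) :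
    shapley (fun S => c * v S) S i = c * shapley v S i := by
  unfold shapley
  rw [mul_sum]
  refine Finset.sum_congr rfl fun T _ => ?_
  rw [dividend_smul]
  split <;> ring

/-- The key combinatorial identity: expShapley as a sum over coalitions T. -/
lemma expShapley_eq (N : Finset α) (v p : Finset α → ℝ) (i : α) :
    expShapley N v p i = ∑ T ∈ N.powerset, if i ∈ T then
      dividend v T * ((T.card:ℝ))⁻¹ * (∑ S ∈ N.powerset, if T ⊆ S then p S else 0) else 0 := by
  unfold expShapley shapley
  have step1 : ∀ S ∈ N.powerset,
      (if i ∈ S then p S * ∑ T ∈ S.powerset, (if i ∈ T then dividend v T / (T.card:ℝ) else 0) else 0)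
      = ∑ T ∈ S.powerset, (if i ∈ T then p S * (dividend v T / (T.card:ℝ)) else 0) := by
    intro S _
    by_cases hiS : i ∈ S
    · rw [if_pos hiS, mul_sum]
      refine Finset.sum_congr rfl fun T _ => ?_
      split <;> simp
    · rw [if_neg hiS]
      symm
      refine Finset.sum_eq_zero fun T hT => ?_
      have : i ∉ T := fun h => hiS ((mem_powerset.1 hT) h)
      simp [this]
  rw [Finset.sum_congr rfl step1]
  rw [Finset.sum_comm' (s' := fun T => N.powerset.filter (fun S => T ⊆ S)) (t' := N.powerset)
    (by intro S T
        simp only [mem_powerset, mem_filter]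
        constructor
        · rintro ⟨h1, h2⟩; exact ⟨⟨h1, h2⟩, h2.trans h1⟩
        · rintro ⟨⟨h1, h2⟩, _⟩; exact ⟨h1, h2⟩)]
  refine Finset.sum_congr rfl fun T _ => ?_
  by_cases hiT : i ∈ T
  · simp only [if_pos hiT]
    rw [Finset.sum_filter, mul_sum]
    refine Finset.sum_congr rfl fun S _ => ?_
    split <;> ring
  · simp [hiT]

lemma phi_unanimity
    (Φ : Finset α → (Finset α → ℝ) → (Finset α → ℝ) → α → ℝ)
    (hEE : ∀ N v p, IsDist N p → v ∅ = 0 → ∑ i ∈ N, Φ N v p i = expWorth N v p)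
    (hENP : ∀ N v p, IsDist N p → v ∅ = 0 → ∀ i ∈ N,
      (∀ S ⊆ N, i ∈ S → 0 < p S → v S = v (S.erase i)) → Φ N v p i = 0)
    (hCOM : ∀ N v p, IsDist N p → v ∅ = 0 → ∀ i ∈ N, ∀ j ∈ N,
      expWorth N v (pMinus p i) = expWorth N v (pMinus p j) → Φ N v p i = Φ N v p j)
    (N : Finset α) (p : Finset α → ℝ) (hp : IsDist N p)
    (T : Finset α) (hT : T ⊆ N) (hTne : T ≠ ∅) (c : ℝ) (i : α) (hi : i ∈ N) :
    Φ N (fun S => c * uGame T S) p i =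
      if i ∈ T then c * ((T.card:ℝ))⁻¹ * (∑ S ∈ N.powerset, if T ⊆ S then p S else 0) else 0 := by
  set g : Finset α → ℝ := fun S => c * uGame T S with hg
  have hg0 : g ∅ = 0 := by
    have : ¬ T ⊆ ∅ := fun h => hTne (subset_empty.1 h)
    simp [hg, uGame, this]
  have hnull : ∀ j ∈ N, j ∉ T → Φ N g p j = 0 := by
    intro j hj hjT
    refine hENP N g p hp hg0 j hj fun S _ _ _ => ?_
    have : T ⊆ S.erase j ↔ T ⊆ S := by
      rw [Finset.subset_erase]
      exact ⟨fun h => h.1, fun h => ⟨h, fun hjmem => hjT (hjmem)⟩⟩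
    simp [hg, uGame, this]
  by_cases hiT : i ∈ T
  · rw [if_pos hiT]
    have hcom : ∀ j ∈ T, Φ N g p j = Φ N g p i := by
      have key : ∀ k ∈ T, expWorth N g (pMinus p k) = 0 := by
        intro k hk
        refine Finset.sum_eq_zero fun S _ => ?_
        by_cases hTS : T ⊆ S
        · have : k ∈ S := hTS hk
          simp [pMinus, this]
        · simp [hg, uGame, hTS]
      intro j hj
      exact hCOM N g p hp hg0 j (hT hj) i hi (by rw [key j hj, key i hiT])
    have heff := hEE N g p hp hg0
    have hW : expWorth N g p = c * (∑ S ∈ N.powerset, if T ⊆ S then p S else 0) := by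
      unfold expWorth
      rw [mul_sum]
      refine Finset.sum_congr rfl fun S _ => ?_
      by_cases hTS : T ⊆ S <;> simp [hg, uGame, hTS] <;> ring
    have hsplit : ∑ j ∈ N \ T, Φ N g p j + ∑ j ∈ T, Φ N g p j = ∑ j ∈ N, Φ N g p j :=
      Finset.sum_sdiff hT
    have h2 : ∑ j ∈ N \ T, Φ N g p j = 0 :=
      Finset.sum_eq_zero fun j hj => hnull j (mem_sdiff.1 hj).1 (mem_sdiff.1 hj).2
    have h1 : ∑ j ∈ T, Φ N g p j = (T.card : ℝ) * Φ N g p i := by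
      rw [Finset.sum_congr rfl hcom, Finset.sum_const, nsmul_eq_mul]
    have hcard : (T.card : ℝ) ≠ 0 := by
      have : T.Nonempty := nonempty_iff_ne_empty.2 hTne
      have := card_pos.2 this
      positivity
    have : (T.card : ℝ) * Φ N g p i = c * (∑ S ∈ N.powerset, if T ⊆ S then p S else 0) := by
      rw [← h1, ← hW, ← heff, ← hsplit, h2, zero_add]
    field_simp at this ⊢
    linarith [this]
  · rw [if_neg hiT]
    exact hnull i hi hiT


/-- First characterization (uniqueness): a value satisfying Expected Efficiency,
Expected Null Player, Compatibility and Additivity is the Expected Shapley value. -/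
theorem first_characterization_uniqueness
    (Φ : Finset α → (Finset α → ℝ) → (Finset α → ℝ) → α → ℝ)
    (hEE : ∀ N v p, IsDist N p → v ∅ = 0 → ∑ i ∈ N, Φ N v p i = expWorth N v p)
    (hENP : ∀ N v p, IsDist N p → v ∅ = 0 → ∀ i ∈ N,
      (∀ S ⊆ N, i ∈ S → 0 < p S → v S = v (S.erase i)) → Φ N v p i = 0)
    (hCOM : ∀ N v p, IsDist N p → v ∅ = 0 → ∀ i ∈ N, ∀ j ∈ N,
      expWorth N v (pMinus p i) = expWorth N v (pMinus p j) → Φ N v p i = Φ N v p j)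
    (hADD : ∀ N v w p, IsDist N p → v ∅ = 0 → w ∅ = 0 → ∀ i ∈ N,
      Φ N (fun S => v S + w S) p i = Φ N v p i + Φ N w p i) :
    ∀ N v p, IsDist N p → v ∅ = 0 → ∀ i ∈ N, Φ N v p i = expShapley N v p i := by
  intro N v p hp hv0 i hi
  classical
  set F : Finset (Finset α) := N.powerset.filter (fun T => T ≠ ∅) with hF
  set g : Finset α → Finset α → ℝ := fun T S => dividend v T * uGame T S with hgdef
  set w : Finset α → ℝ := fun S => ∑ T ∈ F, g T S with hwdef
  have hFmem : ∀ T ∈ F, T ⊆ N ∧ T ≠ ∅ := by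
    intro T hT
    rw [hF, mem_filter, mem_powerset] at hT
    exact hT
  have hg0 : ∀ T ∈ F, g T ∅ = 0 := by
    intro T hT
    have : ¬ T ⊆ ∅ := fun h => (hFmem T hT).2 (subset_empty.1 h)
    simp [hgdef, uGame, this]
  have hw0 : w ∅ = 0 := Finset.sum_eq_zero hg0
  -- w agrees with v on subsets of N
  have hvw : ∀ S ⊆ N, w S = v S := by
    intro S hS
    have step : ∀ T ∈ F, g T S = if T ⊆ S then dividend v T else 0 := by
      intro T _
      by_cases h : T ⊆ S <;> simp [hgdef, uGame, h]
    rw [hwdef]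
    simp only []
    rw [Finset.sum_congr rfl step, ← Finset.sum_filter]
    have hsetseq : F.filter (fun T => T ⊆ S) = S.powerset.filter (fun T => T ≠ ∅) := by
      ext T
      simp only [hF, mem_filter, mem_powerset]
      constructor
      · rintro ⟨⟨_, h2⟩, h3⟩; exact ⟨h3, h2⟩
      · rintro ⟨h1, h2⟩; exact ⟨⟨h1.trans hS, h2⟩, h1⟩
    rw [hsetseq]
    have hdiv0 : dividend v ∅ = 0 := by simp [dividend, hv0]
    rw [Finset.sum_filter_of_ne (fun T _ hne => by
      intro h; subst h; exact hne hdiv0)]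
    exact sum_dividend v S
  -- zero game
  have hΦ0 : Φ N (fun _ => (0:ℝ)) p i = 0 :=
    hENP N _ p hp rfl i hi (fun _ _ _ _ => rfl)
  -- additivity over finite families
  have hsum : ∀ (𝒯 : Finset (Finset α)), 𝒯 ⊆ F →
      Φ N (fun S => ∑ T ∈ 𝒯, g T S) p i = ∑ T ∈ 𝒯, Φ N (g T) p i := by
    intro 𝒯
    induction 𝒯 using Finset.induction_on with
    | empty =>
      intro _
      simpa using hΦ0
    | @insert a s ha ih =>
      intro hsub
      have haF : a ∈ F := hsub (mem_insert_self a s)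
      have hsF : s ⊆ F := fun x hx => hsub (mem_insert_of_mem hx)
      have h1 : g a ∅ = 0 := hg0 a haF
      have h2 : (fun S => ∑ T ∈ s, g T S) ∅ = 0 := Finset.sum_eq_zero fun T hT => hg0 T (hsF hT)
      simp only [Finset.sum_insert ha]
      rw [hADD N (g a) (fun S => ∑ T ∈ s, g T S) p hp h1 h2 i hi, ih hsF]
  -- Φ N v p i = Φ N w p i
  have hΦvw : Φ N v p i = Φ N w p i := by
    have hd0 : (fun S => v S - w S) ∅ = 0 := by
      simp [hv0, hw0]
    have hadd := hADD N w (fun S => v S - w S) p hp hw0 hd0 i hi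
    have heq : (fun S => w S + (v S - w S)) = v := funext fun S => by ring
    rw [heq] at hadd
    have hΦd : Φ N (fun S => v S - w S) p i = 0 := by
      refine hENP N _ p hp hd0 i hi fun S hS hiS _ => ?_
      have h1 : w S = v S := hvw S hS
      have h2 : w (S.erase i) = v (S.erase i) := hvw _ ((erase_subset i S).trans hS)
      show v S - w S = v (S.erase i) - w (S.erase i)
      rw [h1, h2, sub_self, sub_self]
    rw [hadd, hΦd, add_zero]
  -- compute Φ N w p i
  rw [hΦvw, hsum F Subset.rfl]
  have step : ∀ T ∈ F, Φ N (g T) p i =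
      if i ∈ T then dividend v T * ((T.card:ℝ))⁻¹ *
        (∑ S ∈ N.powerset, if T ⊆ S then p S else 0) else 0 := by
    intro T hT
    exact phi_unanimity Φ hEE hENP hCOM N p hp T (hFmem T hT).1 (hFmem T hT).2 (dividend v T) i hi
  rw [Finset.sum_congr rfl step, expShapley_eq]
  symm
  rw [hF]
  refine (Finset.sum_filter_of_ne fun T _ hne => ?_).symm
  intro h
  subst h
  simp at hne
end

section
/- The Expected Shapley value satisfies Expected Balanced Contribution: for all $i \neq j$ in $N$, $\Phi_i^{Exp\text{-}Sh}(N,v,p^N) - \Phi_i^{Exp\text{-}Sh}(N,v,p^N_{-j}) = \Phi_j^{Exp\text{-}Sh}(N,v,p^N) - \Phi_j^{Exp\text{-}Sh}(N,v,p^N_{-i})$. -/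
open Finset

variable {α : Type*} [DecidableEq α]

lemma shapley_erase (v : Finset α → ℝ) (S : Finset α) (i j : α) :
    shapley v (S.erase j) i =
      ∑ T ∈ S.powerset, if i ∈ T ∧ j ∉ T then dividend v T / (T.card : ℝ) else 0 := by
  rw [shapley]
  rw [show (∑ T ∈ (S.erase j).powerset, if i ∈ T then dividend v T / (T.card : ℝ) else 0)
      = ∑ T ∈ (S.erase j).powerset,
          if i ∈ T ∧ j ∉ T then dividend v T / (T.card : ℝ) else 0 from
    Finset.sum_congr rfl (by
      intro T hT
      have hjT : j ∉ T := fun h =>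
        (Finset.mem_erase.1 ((Finset.mem_powerset.1 hT) h)).1 rfl
      simp [hjT])]
  apply Finset.sum_subset (Finset.powerset_mono.2 (Finset.erase_subset j S))
  intro T hT hT'
  have hTS : T ⊆ S := Finset.mem_powerset.1 hT
  have hjT : j ∈ T := by
    by_contra hc
    exact hT' (Finset.mem_powerset.2 (Finset.subset_erase.2 ⟨hTS, hc⟩))
  simp [hjT]

lemma shapley_diff (v : Finset α → ℝ) (S : Finset α) (i j : α) :
    shapley v S i - shapley v (S.erase j) i =
      ∑ T ∈ S.powerset, if i ∈ T ∧ j ∈ T then dividend v T / (T.card : ℝ) else 0 := by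
  rw [shapley_erase, shapley, ← Finset.sum_sub_distrib]
  apply Finset.sum_congr rfl
  intro T _
  by_cases hiT : i ∈ T <;> by_cases hjT : j ∈ T <;> simp [hiT, hjT]

lemma expShapley_key (N : Finset α) (v p : Finset α → ℝ) (k l : α)
    (hl : l ∈ N) (hkl : k ≠ l) :
    expShapley N v p k - expShapley N v (pMinus p l) k =
      ∑ S ∈ N.powerset, if k ∈ S ∧ l ∈ S then
        p S * ∑ T ∈ S.powerset, (if k ∈ T ∧ l ∈ T then dividend v T / (T.card : ℝ) else 0)
      else 0 := by
  have hB : (∑ S ∈ N.powerset,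
        if k ∈ S ∧ l ∉ S then p (insert l S) * shapley v S k else 0)
      = ∑ S ∈ N.powerset,
        if k ∈ S ∧ l ∈ S then p S * shapley v (S.erase l) k else 0 := by
    rw [← Finset.sum_filter, ← Finset.sum_filter]
    refine Finset.sum_bij' (fun S _ => insert l S) (fun S _ => S.erase l)
      ?_ ?_ ?_ ?_ ?_
    · intro S hS
      simp only [Finset.mem_filter, Finset.mem_powerset] at hS ⊢
      exact ⟨Finset.insert_subset hl hS.1, Finset.mem_insert_of_mem hS.2.1,
        Finset.mem_insert_self l S⟩
    · intro S hS
      simp only [Finset.mem_filter, Finset.mem_powerset] at hS ⊢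
      refine ⟨(Finset.erase_subset l S).trans hS.1,
        Finset.mem_erase.2 ⟨hkl, hS.2.1⟩, fun h => (Finset.mem_erase.1 h).1 rfl⟩
    · intro S hS
      simp only [Finset.mem_filter] at hS
      exact Finset.erase_insert hS.2.2
    · intro S hS
      simp only [Finset.mem_filter] at hS
      exact Finset.insert_erase hS.2.2
    · intro S hS
      simp only [Finset.mem_filter] at hS
      rw [Finset.erase_insert hS.2.2]
  have step1 : expShapley N v p k - expShapley N v (pMinus p l) k =
      (∑ S ∈ N.powerset, if k ∈ S ∧ l ∈ S then p S * shapley v S k else 0) -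
      (∑ S ∈ N.powerset, if k ∈ S ∧ l ∉ S then p (insert l S) * shapley v S k else 0) := by
    rw [expShapley, expShapley, ← Finset.sum_sub_distrib, ← Finset.sum_sub_distrib]
    apply Finset.sum_congr rfl
    intro S _
    by_cases hkS : k ∈ S <;> by_cases hlS : l ∈ S <;>
      simp [pMinus, hkS, hlS] <;> ring
  rw [step1, hB, ← Finset.sum_sub_distrib]
  apply Finset.sum_congr rfl
  intro S _
  by_cases h : k ∈ S ∧ l ∈ S
  · rw [if_pos h, if_pos h, if_pos h, ← mul_sub, ← shapley_diff]
  · simp [h]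

/-- Expected Balanced Contribution of the Expected Shapley value. -/
theorem expShapley_balanced_contribution (N : Finset α) (v p : Finset α → ℝ) (i j : α)
    (hi : i ∈ N) (hj : j ∈ N) (hij : i ≠ j) (hdist : IsDist N p) (hv : v ∅ = 0) :
    expShapley N v p i - expShapley N v (pMinus p j) i =
      expShapley N v p j - expShapley N v (pMinus p i) j := by
  rw [expShapley_key N v p i j hj hij, expShapley_key N v p j i hi hij.symm]
  apply Finset.sum_congr rfl
  intro S _
  by_cases h : i ∈ S ∧ j ∈ S
  · rw [if_pos h, if_pos (and_comm.mp h)]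
    congr 1
    apply Finset.sum_congr rfl
    intro T _
    by_cases hT : i ∈ T ∧ j ∈ T
    · rw [if_pos hT, if_pos (and_comm.mp hT)]
    · rw [if_neg hT, if_neg (fun hc => hT (and_comm.mp hc))]
  · rw [if_neg h, if_neg (fun hc => h (and_comm.mp hc))]
end

section
/- Define $\mathcal{P}(N,v,p^N)=\sum_{S\subseteq N} p^N(S) P(S,v)$ where $P$ is the Hart–Mas-Colell potential of classical TU games. Then for every player $i \in N$, $\mathcal{P}(N,v,p^N) - \mathcal{P}(N\setminus i, v, p^{N\setminus i}_{-i}) = \Phi_i^{Exp\text{-}Sh}(N,v,p^N)$. -/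
open Finset

variable {α : Type*} [DecidableEq α]

/-- For the probabilistic potential `𝒫(N,v,p) = ∑_{S ⊆ N} p(S) P(S,v)` built from the
Hart–Mas-Colell potential `P`, the marginal contribution of each player is the
Expected Shapley value. -/
theorem probabilistic_potential_diff (N : Finset α) (v p : Finset α → ℝ) (i : α)
    (P : Finset α → (Finset α → ℝ) → ℝ)
    (hP0 : ∀ w, P ∅ w = 0)
    (hP : ∀ (S : Finset α) (j : α), j ∈ S → P S v - P (S.erase j) v = shapley v S j)
    (hdist : IsDist N p) (hi : i ∈ N) :
    (∑ S ∈ N.powerset, p S * P S v) -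
      (∑ S ∈ (N.erase i).powerset, pMinus p i S * P S v) = expShapley N v p i := by
  classical
  have hN : insert i (N.erase i) = N := insert_erase hi
  have hdisj : Disjoint (N.erase i).powerset (((N.erase i).powerset).image (insert i)) := by
    rw [Finset.disjoint_left]
    intro S hS hS'
    simp only [mem_image, mem_powerset] at hS hS'
    obtain ⟨T, hT, rfl⟩ := hS'
    exact notMem_erase i N (hS (mem_insert_self i T))
  have hinj : ∀ T ∈ (N.erase i).powerset, ∀ T' ∈ (N.erase i).powerset,
      insert i T = insert i T' → T = T' := by
    intro T hT T' hT' h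
    have hiT : i ∉ T := fun h' => notMem_erase i N (mem_powerset.mp hT h')
    have hiT' : i ∉ T' := fun h' => notMem_erase i N (mem_powerset.mp hT' h')
    rw [← erase_insert hiT, ← erase_insert hiT', h]
  rw [expShapley, ← hN, powerset_insert, sum_union hdisj, sum_union hdisj,
    sum_image hinj, sum_image hinj]
  have h1 : ∑ S ∈ (N.erase i).powerset, (if i ∈ S then p S * shapley v S i else 0) = 0 := by
    apply sum_eq_zero
    intro S hS
    exact if_neg (fun h => notMem_erase i N (mem_powerset.mp hS h))
  rw [h1, zero_add]
  have h2 : ∀ S ∈ (N.erase i).powerset,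
      (if i ∈ insert i S then p (insert i S) * shapley v (insert i S) i else 0)
        = p (insert i S) * shapley v (insert i S) i := by
    intro S hS
    exact if_pos (mem_insert_self i S)
  rw [sum_congr rfl h2]
  have h3 : ∀ S ∈ (N.erase i).powerset, pMinus p i S * P S v
      = (p S + p (insert i S)) * P S v := by
    intro S hS
    have : i ∉ S := fun h => notMem_erase i N (mem_powerset.mp hS h)
    rw [pMinus, if_neg this]
  rw [erase_insert (notMem_erase i N), sum_congr rfl h3, ← sum_add_distrib, ← sum_sub_distrib]
  apply sum_congr rfl
  intro S hS
  have hiS : i ∉ S := fun h => notMem_erase i N (mem_powerset.mp hS h)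
  have := hP (insert i S) i (mem_insert_self i S)
  rw [erase_insert hiS] at this
  rw [← this]; ring
end

section
/- Existence and uniqueness of the probabilistic potential: there is a unique function $\mathcal{P}$ on probabilistic TU games with $\mathcal{P}(\emptyset,v,\cdot)=0$ such that $\sum_{i\in N}\big(\mathcal{P}(N,v,p^N)-\mathcal{P}(N\setminus i,v,p^{N\setminus i}_{-i})\big)=\mathbb{E}(N,v,p^N)$ for all $(N,v,p^N)$; moreover $\mathcal{P}(N,v,p^N)=\frac{1}{|N|}\big(\mathbb{E}(N,v,p^N)+\sum_{i\in N}\mathcal{P}(N\setminus i,v,p^{N\setminus i}_{-i})\big)$. -/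
/-!
Solving the balance condition `∑ i ∈ N, (P N - P (N \ i)) = 𝔼` for `P N` gives
`P N = (𝔼 + ∑ i ∈ N, P (N \ i)) / |N|`, a recursion on `|N|`. Taken as a definition it yields
a potential; conversely it determines any potential by strong induction on `N`, which stays
among probabilistic games because `p_{-i}` is again a distribution on the coalitions of `N \ i`.
-/

open Finset

variable {α : Type*} [DecidableEq α]

noncomputable def potential (N : Finset α) (v p : Finset α → ℝ) : ℝ :=
  if N = ∅ then 0 else
    (1 / (N.card : ℝ)) *
      (expWorth N v p + ∑ i ∈ N.attach, potential (N.erase i.1) v (pMinus p i.1))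
termination_by N.card
decreasing_by exact card_erase_lt_of_mem i.2

def MarginalsSumToExpWorth (P : Finset α → (Finset α → ℝ) → (Finset α → ℝ) → ℝ) : Prop :=
  ∀ N v p, IsDist N p → v ∅ = 0 →
    ∑ i ∈ N, (P N v p - P (N.erase i) v (pMinus p i)) = expWorth N v p

def IsPotential (P : Finset α → (Finset α → ℝ) → (Finset α → ℝ) → ℝ) : Prop :=
  (∀ v q, P ∅ v q = 0) ∧ MarginalsSumToExpWorth P

omit [DecidableEq α] in
theorem sum_sub_eq_iff_eq_inv_card_mul {ι : Type*} {s : Finset ι} (hs : s.Nonempty)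
    (x e : ℝ) (y : ι → ℝ) :
    ∑ i ∈ s, (x - y i) = e ↔ x = 1 / (s.card : ℝ) * (e + ∑ i ∈ s, y i) := by
  have hc : (s.card : ℝ) ≠ 0 := Nat.cast_ne_zero.2 hs.card_ne_zero
  rw [sum_sub_distrib, sum_const, nsmul_eq_mul, one_div, eq_inv_mul_iff_mul_eq₀ hc]
  constructor <;> intro h <;> linarith

omit [DecidableEq α] in
theorem expWorth_empty {v : Finset α → ℝ} (hv : v ∅ = 0) (p : Finset α → ℝ) :
    expWorth ∅ v p = 0 := by
  simp [expWorth, hv]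

theorem isDist_pMinus {N : Finset α} {p : Finset α → ℝ} (hp : IsDist N p) {i : α}
    (hi : i ∈ N) : IsDist (N.erase i) (pMinus p i) := by
  obtain ⟨hnonneg, hsupp, hsum⟩ := hp
  refine ⟨fun S => ?_, fun S hS => ?_, ?_⟩
  · unfold pMinus
    split_ifs
    exacts [le_rfl, add_nonneg (hnonneg _) (hnonneg _)]
  · unfold pMinus
    split_ifs with hiS
    · rfl
    · have hSN : ¬ S ⊆ N := fun h => hS (subset_erase.2 ⟨h, hiS⟩)
      rw [hsupp S hSN, hsupp _ fun h => hSN ((subset_insert i S).trans h), add_zero]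
  · have hi' : i ∉ N.erase i := notMem_erase i N
    calc ∑ S ∈ (N.erase i).powerset, pMinus p i S
        = ∑ S ∈ (N.erase i).powerset, (p S + p (insert i S)) :=
          sum_congr rfl fun S hS => if_neg fun h => hi' (mem_powerset.1 hS h)
      _ = ∑ S ∈ N.powerset, p S := by
          rw [sum_add_distrib, ← sum_powerset_insert hi', insert_erase hi]
      _ = 1 := hsum

theorem potential_empty (v p : Finset α → ℝ) : potential ∅ v p = 0 := by
  rw [potential, if_pos rfl]

theorem potential_eq_of_ne_empty {N : Finset α} (hN : N ≠ ∅) (v p : Finset α → ℝ) :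
    potential N v p = 1 / (N.card : ℝ) *
      (expWorth N v p + ∑ i ∈ N, potential (N.erase i) v (pMinus p i)) := by
  rw [potential, if_neg hN, ← sum_attach N fun i => potential (N.erase i) v (pMinus p i)]

theorem marginalsSumToExpWorth_potential : MarginalsSumToExpWorth (α := α) potential := by
  intro N v p _ hv
  rcases N.eq_empty_or_nonempty with rfl | hN
  · rw [sum_empty, expWorth_empty hv]
  · exact (sum_sub_eq_iff_eq_inv_card_mul hN _ _ _).2 (potential_eq_of_ne_empty hN.ne_empty v p)

theorem isPotential_potential : IsPotential (α := α) potential :=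
  ⟨potential_empty, marginalsSumToExpWorth_potential⟩

theorem MarginalsSumToExpWorth.eq_inv_card_mul
    {P : Finset α → (Finset α → ℝ) → (Finset α → ℝ) → ℝ} (hP : MarginalsSumToExpWorth P)
    {N : Finset α} (hN : N.Nonempty) {v p : Finset α → ℝ} (hp : IsDist N p) (hv : v ∅ = 0) :
    P N v p = 1 / (N.card : ℝ) * (expWorth N v p + ∑ i ∈ N, P (N.erase i) v (pMinus p i)) :=
  (sum_sub_eq_iff_eq_inv_card_mul hN _ _ _).1 (hP N v p hp hv)

theorem IsPotential.eq {P Q : Finset α → (Finset α → ℝ) → (Finset α → ℝ) → ℝ}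
    (hP : IsPotential P) (hQ : IsPotential Q) (N : Finset α) {v p : Finset α → ℝ}
    (hp : IsDist N p) (hv : v ∅ = 0) : P N v p = Q N v p := by
  induction N using strongInduction generalizing p with
  | H N ih =>
    rcases N.eq_empty_or_nonempty with rfl | hN
    · rw [hP.1, hQ.1]
    · rw [hP.2.eq_inv_card_mul hN hp hv, hQ.2.eq_inv_card_mul hN hp hv]
      congr 2
      exact sum_congr rfl fun i hi => ih _ (erase_ssubset hi) (isDist_pMinus hp hi)

/-- Existence and uniqueness of the probabilistic potential, together with its
recursive formula. -/
theorem probabilistic_potential_exists_unique :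
    (∃ P : Finset α → (Finset α → ℝ) → (Finset α → ℝ) → ℝ,
      (∀ v q, P ∅ v q = 0) ∧
      (∀ N v p, IsDist N p → v ∅ = 0 →
        ∑ i ∈ N, (P N v p - P (N.erase i) v (pMinus p i)) = expWorth N v p)) ∧
    (∀ P Q : Finset α → (Finset α → ℝ) → (Finset α → ℝ) → ℝ,
      (∀ v q, P ∅ v q = 0) →
      (∀ N v p, IsDist N p → v ∅ = 0 →
        ∑ i ∈ N, (P N v p - P (N.erase i) v (pMinus p i)) = expWorth N v p) →
      (∀ v q, Q ∅ v q = 0) →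
      (∀ N v p, IsDist N p → v ∅ = 0 →
        ∑ i ∈ N, (Q N v p - Q (N.erase i) v (pMinus p i)) = expWorth N v p) →
      ∀ N v p, IsDist N p → v ∅ = 0 → P N v p = Q N v p) ∧
    (∀ P : Finset α → (Finset α → ℝ) → (Finset α → ℝ) → ℝ,
      (∀ v q, P ∅ v q = 0) →
      (∀ N v p, IsDist N p → v ∅ = 0 →
        ∑ i ∈ N, (P N v p - P (N.erase i) v (pMinus p i)) = expWorth N v p) →
      ∀ N v p, N ≠ ∅ → IsDist N p → v ∅ = 0 →
        P N v p = (1 / (N.card : ℝ)) *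
          (expWorth N v p + ∑ i ∈ N, P (N.erase i) v (pMinus p i))) := by
  refine ⟨⟨potential, isPotential_potential⟩, ?_, ?_⟩
  · intro P Q hP0 hP hQ0 hQ N v p hp hv
    exact IsPotential.eq ⟨hP0, hP⟩ ⟨hQ0, hQ⟩ N hp hv
  · intro P _ hP N v p hN hp hv
    exact MarginalsSumToExpWorth.eq_inv_card_mul hP (nonempty_iff_ne_empty.2 hN) hp hv
end

section
/- The Expected Shapley value is Standard for two-person probabilistic games: for $N=\{i,j\}$, $\Phi_i^{Exp\text{-}Sh}(\{i,j\},v,p^N) = \mathbb{E}(\{i,j\},v,p^N_{-j}) + \tfrac{1}{2} p^N(\{i,j\})\big(v(\{i,j\})-v(\{i\})-v(\{j\})\big)$. -/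
open Finset

variable {α : Type*} [DecidableEq α]

/-- The Expected Shapley value is Standard for two-person probabilistic games. -/
theorem expShapley_standard_two (i j : α) (hij : i ≠ j) (v p : Finset α → ℝ)
    (hv : v ∅ = 0) (hdist : IsDist ({i, j} : Finset α) p) :
    expShapley {i, j} v p i =
      expWorth {i, j} v (pMinus p j) +
        (1 / 2) * p {i, j} * (v {i, j} - v {i} - v {j}) := by

  have hji : j ≠ i := hij.symm
  have hps : ∀ a : α, ({a} : Finset α).powerset = {∅, {a}} := by
    intro a; ext S; simp [Finset.subset_singleton_iff]
  have hpp : ({i, j} : Finset α).powerset = {∅, {j}, {i}, {i, j}} := by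
    rw [show ({i, j} : Finset α) = insert i {j} from rfl, Finset.powerset_insert, hps]
    ext S
    simp [Finset.mem_insert, or_comm, or_assoc, or_left_comm, Finset.insert_comm]
  have hmemi : i ∉ ({j} : Finset α) := by simp [hij]
  have hmemj : j ∉ ({i} : Finset α) := by simp [hji]
  have hne1 : ({i} : Finset α) ≠ ∅ := by simp
  have hne2 : ({j} : Finset α) ≠ ∅ := by simp
  have hne3 : ({i, j} : Finset α) ≠ ∅ := by simp
  have hne4 : ({i} : Finset α) ≠ {j} := by
    intro h; exact hij (by simpa using h.le (Finset.mem_singleton_self i))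
  have hne5 : ({i, j} : Finset α) ≠ {i} := by
    intro h; exact hji (by simpa [hij] using h.le (by simp))
  have hne6 : ({i, j} : Finset α) ≠ {j} := by
    intro h; exact hij (by simpa [hji] using h.le (by simp))
  have hdiv1 : dividend v {i} = v {i} := by
    simp [dividend, hps i, Finset.sum_insert, hne1.symm, hv]
  have hdivij : dividend v {i, j} = v {i, j} - v {i} - v {j} := by
    simp only [dividend, hpp]
    rw [Finset.sum_insert (by simp [hne2.symm, hne3.symm, hne1.symm, hji]),
      Finset.sum_insert (by simp [hne3.symm, hne6.symm, hne4, hji]),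
      Finset.sum_insert (by simp [hne5.symm, hji]), Finset.sum_singleton]
    have c2 : ({i, j} : Finset α).card = 2 := by
      rw [Finset.card_insert_of_notMem hmemi, Finset.card_singleton]
    simp [hv, c2]
    ring
  have hsh1 : shapley v {i} i = v {i} := by
    simp [shapley, hps i, Finset.sum_insert, hne1.symm, hdiv1]
  have hshij : shapley v {i, j} i = v {i} + (v {i, j} - v {i} - v {j}) / 2 := by
    simp only [shapley, hpp]
    rw [Finset.sum_insert (by simp [hne2.symm, hne3.symm, hne1.symm, hji]),
      Finset.sum_insert (by simp [hne3.symm, hne6.symm, hne4, hji]),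
      Finset.sum_insert (by simp [hne5.symm, hji]), Finset.sum_singleton]
    have c2 : ({i, j} : Finset α).card = 2 := by
      rw [Finset.card_insert_of_notMem hmemi, Finset.card_singleton]
    simp [hij, hji, hdiv1, hdivij, c2]
  have hins : insert j ({i} : Finset α) = {i, j} := by
    ext x; simp [or_comm]
  simp only [expShapley, expWorth, hpp]
  rw [Finset.sum_insert (by simp [hne2.symm, hne3.symm, hne1.symm, hji]),
    Finset.sum_insert (by simp [hne3.symm, hne6.symm, hne4, hji]),
    Finset.sum_insert (by simp [hne5.symm, hji]), Finset.sum_singleton,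
    Finset.sum_insert (by simp [hne2.symm, hne3.symm, hne1.symm, hji]),
    Finset.sum_insert (by simp [hne3.symm, hne6.symm, hne4, hji]),
    Finset.sum_insert (by simp [hne5.symm, hji]), Finset.sum_singleton]
  simp [hij, hji, hsh1, hshij, pMinus, hv, hins]
  try ring
end

section
/- p-Consistency of the Expected Shapley value: for every probabilistic TU game $(N,v,p^N)$, coalition $T \subseteq N$ and $i \in T$, $\Phi_i^{Exp\text{-}Sh}(T, v_T^{p^N}, p_T^T) = \Phi_i^{Exp\text{-}Sh}(N,v,p^N)$, where the probabilistic reduced game is $v_T^{p^N}(S) = \sum_{\emptyset\neq K_1 \subseteq S,\ K_2 \subseteq N\setminus T} |K_1| \frac{\Delta_v(K_1\cup K_2)}{|K_1|+|K_2|} \cdot \frac{p^N_{K_1\cup K_2}(K_1\cup K_2)}{p^N_{K_1}(K_1)}$ (assuming $p^N_{K_1}(K_1)>0$ for all nonempty $K_1\subseteq T$). -/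
open Finset

variable {α : Type*} [DecidableEq α]

/-- Probabilistic reduced game (with respect to the Shapley value, in dividend form). -/
noncomputable def reducedGame (N T : Finset α) (v p : Finset α → ℝ) (S : Finset α) : ℝ :=
  ∑ K₁ ∈ S.powerset.erase ∅, ∑ K₂ ∈ (N \ T).powerset,
    (K₁.card : ℝ) * (dividend v (K₁ ∪ K₂) / ((K₁.card : ℝ) + (K₂.card : ℝ))) *
      (pBar N p (K₁ ∪ K₂) / pBar N p K₁)

section AuxLemmas

lemma sum_powerset_union_disjoint {A B : Finset α} (h : Disjoint A B) (f : Finset α → ℝ) :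
    ∑ S ∈ (A ∪ B).powerset, f S = ∑ U ∈ A.powerset, ∑ V ∈ B.powerset, f (U ∪ V) := by
  rw [← Finset.sum_product']
  refine Finset.sum_nbij' (fun S => (S ∩ A, S ∩ B)) (fun P => P.1 ∪ P.2) ?_ ?_ ?_ ?_ ?_
  · intro S hS
    simp only [Finset.mem_product, Finset.mem_powerset]
    exact ⟨inter_subset_right, inter_subset_right⟩
  · intro P hP
    simp only [Finset.mem_product, Finset.mem_powerset] at hP ⊢
    exact Finset.union_subset_union hP.1 hP.2
  · intro S hS
    rw [Finset.mem_powerset] at hS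
    show S ∩ A ∪ S ∩ B = S
    rw [← Finset.inter_union_distrib_left, Finset.inter_eq_left.2 hS]
  · intro P hP
    simp only [Finset.mem_product, Finset.mem_powerset] at hP
    have hd2 := Finset.disjoint_left.1 (h.symm.mono_left hP.2)
    have hd1 := Finset.disjoint_left.1 (h.mono_left hP.1)
    have h1 : (P.1 ∪ P.2) ∩ A = P.1 := by
      ext a
      simp only [Finset.mem_inter, Finset.mem_union]
      constructor
      · rintro ⟨h1 | h2, ha⟩
        · exact h1
        · exact absurd ha (hd2 h2)
      · intro haP; exact ⟨Or.inl haP, hP.1 haP⟩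
    have h2 : (P.1 ∪ P.2) ∩ B = P.2 := by
      ext a
      simp only [Finset.mem_inter, Finset.mem_union]
      constructor
      · rintro ⟨h1 | h2, ha⟩
        · exact absurd ha (hd1 h1)
        · exact h2
      · intro haP; exact ⟨Or.inr haP, hP.2 haP⟩
    show ((P.1 ∪ P.2) ∩ A, (P.1 ∪ P.2) ∩ B) = P
    rw [h1, h2]
  · intro S hS
    rw [Finset.mem_powerset] at hS
    show f S = f (S ∩ A ∪ S ∩ B)
    rw [← Finset.inter_union_distrib_left, Finset.inter_eq_left.2 hS]

lemma sum_superset_of {S K : Finset α} (hK : K ⊆ S) (f : Finset α → ℝ) :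
    ∑ T ∈ S.powerset, (if K ⊆ T then f T else 0) = ∑ U ∈ (S \ K).powerset, f (K ∪ U) := by
  rw [← Finset.sum_filter]
  refine Finset.sum_nbij' (fun T => T \ K) (fun U => K ∪ U) ?_ ?_ ?_ ?_ ?_
  · intro T hT
    simp only [Finset.mem_filter, Finset.mem_powerset] at hT ⊢
    exact Finset.sdiff_subset_sdiff hT.1 le_rfl
  · intro U hU
    simp only [Finset.mem_filter, Finset.mem_powerset] at hU ⊢
    exact ⟨Finset.union_subset hK (hU.trans (Finset.sdiff_subset)), Finset.subset_union_left⟩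
  · intro T hT
    simp only [Finset.mem_filter, Finset.mem_powerset] at hT
    exact Finset.union_sdiff_of_subset hT.2
  · intro U hU
    simp only [Finset.mem_powerset] at hU
    exact Finset.union_sdiff_cancel_left (Finset.disjoint_sdiff.mono_right hU)
  · intro T hT
    simp only [Finset.mem_filter, Finset.mem_powerset] at hT
    rw [Finset.union_sdiff_of_subset hT.2]

lemma neg_one_pow_card_real (x : Finset α) :
    (∑ m ∈ x.powerset, (-1 : ℝ) ^ m.card) = if x = ∅ then 1 else 0 := by
  have := Finset.sum_powerset_neg_one_pow_card (x := x)
  have h : ((∑ m ∈ x.powerset, (-1 : ℤ) ^ m.card : ℤ) : ℝ)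
      = ∑ m ∈ x.powerset, (-1 : ℝ) ^ m.card := by push_cast; rfl
  rw [← h, this]
  split <;> norm_num

lemma neg_one_pow_sub_real {a b : ℕ} (h : b ≤ a) :
    ((-1 : ℝ)) ^ (a - b) = (-1) ^ a * (-1) ^ b := by
  have h1 : ((-1 : ℝ)) ^ (a - b) * (-1) ^ b = (-1) ^ a := by
    rw [← pow_add, Nat.sub_add_cancel h]
  have h2 : ((-1 : ℝ)) ^ b * (-1) ^ b = 1 := by
    rw [← pow_add, ← two_mul, pow_mul]; norm_num
  calc ((-1 : ℝ)) ^ (a - b) = (-1) ^ (a - b) * ((-1) ^ b * (-1) ^ b) := by rw [h2, mul_one]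
    _ = ((-1 : ℝ)) ^ (a - b) * (-1) ^ b * (-1) ^ b := by ring
    _ = (-1) ^ a * (-1) ^ b := by rw [h1]

lemma dividend_of_sum (g : Finset α → ℝ) (S : Finset α) :
    dividend (fun X => ∑ K ∈ X.powerset, g K) S = g S := by
  unfold dividend
  have step1 : ∀ T ∈ S.powerset, (-1 : ℝ) ^ (S.card - T.card) * ∑ K ∈ T.powerset, g K
      = ∑ K ∈ S.powerset, (if K ⊆ T then (-1 : ℝ) ^ S.card * (-1) ^ T.card * g K else 0) := by
    intro T hT
    rw [Finset.mem_powerset] at hT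
    rw [Finset.mul_sum]
    rw [← Finset.sum_filter]
    have : T.powerset = S.powerset.filter (· ⊆ T) := by
      ext K
      simp only [Finset.mem_powerset, Finset.mem_filter]
      exact ⟨fun h => ⟨h.trans hT, h⟩, fun h => h.2⟩
    rw [this]
    refine Finset.sum_congr rfl fun K hK => ?_
    rw [neg_one_pow_sub_real (Finset.card_le_card hT)]
  rw [Finset.sum_congr rfl step1, Finset.sum_comm]
  have step2 : ∀ K ∈ S.powerset,
      (∑ T ∈ S.powerset, if K ⊆ T then (-1 : ℝ) ^ S.card * (-1) ^ T.card * g K else 0)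
      = (if K = S then g K else 0) := by
    intro K hK
    rw [Finset.mem_powerset] at hK
    rw [sum_superset_of hK]
    have : ∀ U ∈ (S \ K).powerset,
        (-1 : ℝ) ^ S.card * (-1) ^ (K ∪ U).card * g K
        = ((-1 : ℝ) ^ S.card * (-1) ^ K.card * g K) * (-1) ^ U.card := by
      intro U hU
      rw [Finset.mem_powerset] at hU
      rw [Finset.card_union_of_disjoint (Finset.disjoint_sdiff.mono_right hU), pow_add]
      ring
    rw [Finset.sum_congr rfl this]
    have e2 : ∀ U ∈ (S \ K).powerset, ((-1 : ℝ) ^ S.card * (-1) ^ K.card * g K) * (-1) ^ U.card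
        = ((-1 : ℝ) ^ S.card * (-1) ^ K.card * g K) * (-1) ^ U.card := fun _ _ => rfl
    rw [← Finset.mul_sum, neg_one_pow_card_real]
    have hiff : S \ K = ∅ ↔ K = S := by
      rw [Finset.sdiff_eq_empty_iff_subset]
      exact ⟨fun h => le_antisymm hK h, fun h => h ▸ le_rfl⟩
    by_cases h : K = S
    · subst h
      rw [if_pos (hiff.2 rfl), if_pos rfl, mul_one]
      have hone : ((-1 : ℝ)) ^ K.card * (-1) ^ K.card = 1 := by
        rw [← pow_add, ← two_mul, pow_mul]; norm_num
      calc (-1 : ℝ) ^ K.card * (-1) ^ K.card * g K = 1 * g K := by rw [hone]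
        _ = g K := one_mul _
    · rw [if_neg (fun he => h (hiff.1 he)), if_neg h, mul_zero]
  rw [Finset.sum_congr rfl step2, Finset.sum_ite_eq' S.powerset S g,
    if_pos (Finset.mem_powerset.2 le_rfl)]

lemma expShapley_eq_dividend (N : Finset α) (v p : Finset α → ℝ) (i : α) :
    expShapley N v p i
      = ∑ K ∈ N.powerset, (if i ∈ K then dividend v K / (K.card : ℝ) * pBar N p K else 0) := by
  unfold expShapley shapley
  have step1 : ∀ S ∈ N.powerset,
      (if i ∈ S then p S * ∑ T ∈ S.powerset, (if i ∈ T then dividend v T / (T.card : ℝ) else 0) else 0)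
      = ∑ K ∈ N.powerset, (if K ⊆ S ∧ i ∈ K then p S * (dividend v K / (K.card : ℝ)) else 0) := by
    intro S hS
    rw [Finset.mem_powerset] at hS
    by_cases hiS : i ∈ S
    · rw [if_pos hiS, Finset.mul_sum]
      have e1 : ∀ K ∈ S.powerset, p S * (if i ∈ K then dividend v K / (K.card : ℝ) else 0)
          = (if K ⊆ S ∧ i ∈ K then p S * (dividend v K / (K.card : ℝ)) else 0) := by
        intro K hK
        rw [Finset.mem_powerset] at hK
        by_cases hiK : i ∈ K
        · rw [if_pos hiK, if_pos ⟨hK, hiK⟩]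
        · rw [if_neg hiK, if_neg (fun hc => hiK hc.2), mul_zero]
      rw [Finset.sum_congr rfl e1]
      refine Finset.sum_subset (Finset.powerset_mono.2 hS) fun K _ hKS => ?_
      rw [Finset.mem_powerset] at hKS
      exact if_neg (fun hc => hKS hc.1)
    · rw [if_neg hiS]
      symm
      refine Finset.sum_eq_zero fun K hK => ?_
      rw [if_neg]
      rintro ⟨h1, h2⟩
      exact hiS (h1 h2)
  rw [Finset.sum_congr rfl step1, Finset.sum_comm]
  refine Finset.sum_congr rfl fun K hK => ?_
  rw [Finset.mem_powerset] at hK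
  by_cases hiK : i ∈ K
  · rw [if_pos hiK]
    have : ∀ S ∈ N.powerset, (if K ⊆ S ∧ i ∈ K then p S * (dividend v K / (K.card : ℝ)) else 0)
        = (if K ⊆ S then (dividend v K / (K.card : ℝ)) * p S else 0) := by
      intro S hS
      simp only [hiK, and_true]
      split <;> ring
    rw [Finset.sum_congr rfl this, sum_superset_of hK, ← Finset.mul_sum]
    rfl
  · rw [if_neg hiK]
    refine Finset.sum_eq_zero fun S hS => ?_
    exact if_neg (fun h => hiK h.2)

lemma sdiff_union_split {N T K : Finset α} (hK : K ⊆ T) (hT : T ⊆ N) :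
    N \ K = (T \ K) ∪ (N \ T) := by
  ext a
  simp only [Finset.mem_sdiff, Finset.mem_union]
  constructor
  · rintro ⟨haN, haK⟩
    by_cases haT : a ∈ T
    · exact Or.inl ⟨haT, haK⟩
    · exact Or.inr ⟨haN, haT⟩
  · rintro (⟨haT, haK⟩ | ⟨haN, haT⟩)
    · exact ⟨hT haT, haK⟩
    · exact ⟨haN, fun hc => haT (hK hc)⟩

lemma pBar_restrict {N T K : Finset α} (p : Finset α → ℝ) (hK : K ⊆ T) (hT : T ⊆ N) :
    pBar T (pRestrict N T p) K = pBar N p K := by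
  unfold pBar pRestrict
  have hdisj : Disjoint (T \ K) (N \ T) := by
    rw [Finset.disjoint_left]
    intro a ha hb
    exact (Finset.mem_sdiff.1 hb).2 (Finset.mem_sdiff.1 ha).1
  rw [Finset.sum_congr rfl (fun U hU => ?_), ← sum_powerset_union_disjoint hdisj
      (fun W => p (K ∪ W)), ← sdiff_union_split hK hT]
  rw [Finset.mem_powerset] at hU
  rw [if_pos (Finset.union_subset hK (hU.trans Finset.sdiff_subset))]
  exact Finset.sum_congr rfl fun V _ => by rw [Finset.union_assoc]

lemma dividend_reducedGame (N T : Finset α) (v p : Finset α → ℝ) (K : Finset α) :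
    dividend (reducedGame N T v p) K
      = if K = ∅ then 0 else ∑ K₂ ∈ (N \ T).powerset,
          (K.card : ℝ) * (dividend v (K ∪ K₂) / ((K.card : ℝ) + (K₂.card : ℝ))) *
            (pBar N p (K ∪ K₂) / pBar N p K) := by
  set g : Finset α → ℝ := fun K₁ => if K₁ = ∅ then 0 else ∑ K₂ ∈ (N \ T).powerset,
      (K₁.card : ℝ) * (dividend v (K₁ ∪ K₂) / ((K₁.card : ℝ) + (K₂.card : ℝ))) *
        (pBar N p (K₁ ∪ K₂) / pBar N p K₁) with hg
  have hred : reducedGame N T v p = fun S => ∑ K₁ ∈ S.powerset, g K₁ := by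
    funext S
    rw [← Finset.sum_erase_add S.powerset g (Finset.mem_powerset.2 (Finset.empty_subset S))]
    have hg0 : g ∅ = 0 := by simp [hg]
    rw [hg0, add_zero]
    refine Finset.sum_congr rfl fun K₁ hK₁ => ?_
    rw [hg]
    exact (if_neg (Finset.mem_erase.1 hK₁).1).symm
  rw [hred, dividend_of_sum]

lemma sum_powerset_split {N T : Finset α} (hT : T ⊆ N) (F : Finset α → ℝ) :
    ∑ K ∈ N.powerset, F K = ∑ U ∈ T.powerset, ∑ V ∈ (N \ T).powerset, F (U ∪ V) := by
  rw [← sum_powerset_union_disjoint Finset.disjoint_sdiff F, Finset.union_sdiff_of_subset hT]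

end AuxLemmas

/-- p-Consistency of the Expected Shapley value. -/
theorem expShapley_pConsistency (N T : Finset α) (v p : Finset α → ℝ) (i : α)
    (hdist : IsDist N p) (hv : v ∅ = 0) (hT : T ⊆ N) (hi : i ∈ T)
    (hpos : ∀ K ⊆ T, K ≠ ∅ → 0 < pBar N p K) :
    expShapley T (reducedGame N T v p) (pRestrict N T p) i = expShapley N v p i := by
  have hdisj : Disjoint T (N \ T) := Finset.disjoint_sdiff
  rw [expShapley_eq_dividend, expShapley_eq_dividend]
  rw [sum_powerset_split hT
    (fun K => if i ∈ K then dividend v K / (K.card : ℝ) * pBar N p K else 0)]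
  refine Finset.sum_congr rfl fun K₁ hK₁ => ?_
  rw [Finset.mem_powerset] at hK₁
  by_cases hiK : i ∈ K₁
  · rw [if_pos hiK]
    have hKne : K₁ ≠ ∅ := Finset.ne_empty_of_mem hiK
    have hc₁ : (0 : ℝ) < K₁.card := by
      exact_mod_cast Finset.card_pos.2 ⟨i, hiK⟩
    have hP₁ : 0 < pBar N p K₁ := hpos K₁ hK₁ hKne
    rw [dividend_reducedGame, if_neg hKne, pBar_restrict p hK₁ hT]
    rw [Finset.sum_div, Finset.sum_mul]
    refine Finset.sum_congr rfl fun K₂ hK₂ => ?_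
    rw [Finset.mem_powerset] at hK₂
    have hd : Disjoint K₁ K₂ := hdisj.mono (Finset.le_iff_subset.2 hK₁) (Finset.le_iff_subset.2 hK₂)
    have hiu : i ∈ K₁ ∪ K₂ := Finset.mem_union_left _ hiK
    rw [if_pos hiu, Finset.card_union_of_disjoint hd]
    have hsum : ((K₁.card : ℝ) + K₂.card) ≠ 0 := by positivity
    push_cast
    field_simp
  · rw [if_neg hiK]
    refine (Finset.sum_eq_zero fun K₂ hK₂ => ?_).symm
    rw [Finset.mem_powerset] at hK₂
    refine if_neg fun hc => ?_
    rcases Finset.mem_union.1 hc with h | h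
    · exact hiK h
    · exact (Finset.mem_sdiff.1 (hK₂ h)).2 hi
end
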